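/- Fix a probability vector η ∈ Δ^K with all coordinates positive and a value c ∈ (0,1). The function u ↦ −Σ_y η_y log ψ̃_y(u) − (1−c) log(1 − ψ̃_{K+1}(u)) − c log ψ̃_{K+1}(u) over u ∈ R^{K+1} is minimized exactly when ψ̃_y(u) = η_y for all y ∈ {1,...,K} and ψ̃_{K+1}(u) = c. -/

import Mathlib

/-- The asymmetric softmax function of Definition 2. -/
noncomputable def asoftmax (K : ℕ) (u : Fin (K + 1) → ℝ) (y : Fin (K + 1)) : ℝ :=
  if y = Fin.last K then
    Real.exp (u y) /
      ((∑ y' : Fin (K + 1), Real.exp (u y')) - ⨆ y' : Fin K, Real.exp (u y'.castSucc))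
  else Real.exp (u y) / ∑ y' : Fin K, Real.exp (u y'.castSucc)

/-- The pointwise conditional risk of the asymmetric softmax-parameterized loss
under class posterior η and expert accuracy c. -/
noncomputable def condRisk (K : ℕ) (η : Fin K → ℝ) (c : ℝ)
    (u : Fin (K + 1) → ℝ) : ℝ :=
  -(∑ y : Fin K, η y * Real.log (asoftmax K u y.castSucc))
    - (1 - c) * Real.log (1 - asoftmax K u (Fin.last K))
    - c * Real.log (asoftmax K u (Fin.last K))

/-!
The risk depends on `u` only through `p = (ψ̃_1(u), …, ψ̃_K(u))` and `q = ψ̃_{K+1}(u)`: it is the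
cross entropy of `p` against `η` plus the binary cross entropy of `q` against `c`. Here `p` lies in
the open simplex, and `0 < q < 1` because for `K > 1` the largest of the `K` exponentials is
strictly smaller than their sum. By Gibbs' inequality each cross entropy is minimized exactly at
`p = η`, resp. `q = c`, and this point is attained by some `u`.
-/

open Real Finset

lemma mul_log_sub_mul_log_le {w p : ℝ} (hw : 0 < w) (hp : 0 < p) :
    w * log p - w * log w ≤ p - w := by
  have h := mul_le_mul_of_nonneg_left (log_le_sub_one_of_pos (div_pos hp hw)) hw.le
  rwa [log_div hp.ne' hw.ne', mul_sub, mul_sub, mul_div_cancel₀ _ hw.ne', mul_one] at h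

lemma mul_log_sub_mul_log_lt {w p : ℝ} (hw : 0 < w) (hp : 0 < p) (hne : p ≠ w) :
    w * log p - w * log w < p - w := by
  have hne' : p / w ≠ 1 := fun h => hne ((div_eq_one_iff_eq hw.ne').mp h)
  have h := mul_lt_mul_of_pos_left (log_lt_sub_one_of_pos (div_pos hp hw) hne') hw
  rwa [log_div hp.ne' hw.ne', mul_sub, mul_sub, mul_div_cancel₀ _ hw.ne', mul_one] at h

section Gibbs

variable {ι : Type*} [Fintype ι] {w p : ι → ℝ}

theorem sum_mul_log_le_sum_mul_log (hw : ∀ i, 0 < w i) (hp : ∀ i, 0 < p i)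
    (hsum : ∑ i, p i ≤ ∑ i, w i) :
    ∑ i, w i * log (p i) ≤ ∑ i, w i * log (w i) := by
  have h : ∑ i, (w i * log (p i) - w i * log (w i)) ≤ ∑ i, (p i - w i) :=
    sum_le_sum fun i _ => mul_log_sub_mul_log_le (hw i) (hp i)
  simp only [sum_sub_distrib] at h
  linarith

theorem sum_mul_log_lt_sum_mul_log (hw : ∀ i, 0 < w i) (hp : ∀ i, 0 < p i)
    (hsum : ∑ i, p i ≤ ∑ i, w i) (hne : p ≠ w) :
    ∑ i, w i * log (p i) < ∑ i, w i * log (w i) := by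
  obtain ⟨i₀, hi₀⟩ := Function.ne_iff.mp hne
  have h : ∑ i, (w i * log (p i) - w i * log (w i)) < ∑ i, (p i - w i) :=
    sum_lt_sum (fun i _ => mul_log_sub_mul_log_le (hw i) (hp i))
      ⟨i₀, mem_univ _, mul_log_sub_mul_log_lt (hw i₀) (hp i₀) hi₀⟩
  simp only [sum_sub_distrib] at h
  linarith

end Gibbs

lemma mul_log_add_mul_log_one_sub_le {c q : ℝ} (hc : 0 < c) (hc1 : c < 1) (hq : 0 < q)
    (hq1 : q < 1) :
    c * log q + (1 - c) * log (1 - q) ≤ c * log c + (1 - c) * log (1 - c) := by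
  simpa [Fin.sum_univ_two] using sum_mul_log_le_sum_mul_log (w := ![c, 1 - c]) (p := ![q, 1 - q])
    (Fin.forall_fin_two.2 ⟨hc, sub_pos.2 hc1⟩) (Fin.forall_fin_two.2 ⟨hq, sub_pos.2 hq1⟩)
    (by simp [Fin.sum_univ_two])

lemma mul_log_add_mul_log_one_sub_lt {c q : ℝ} (hc : 0 < c) (hc1 : c < 1) (hq : 0 < q)
    (hq1 : q < 1) (hne : q ≠ c) :
    c * log q + (1 - c) * log (1 - q) < c * log c + (1 - c) * log (1 - c) := by
  simpa [Fin.sum_univ_two] using sum_mul_log_lt_sum_mul_log (w := ![c, 1 - c]) (p := ![q, 1 - q])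
    (Fin.forall_fin_two.2 ⟨hc, sub_pos.2 hc1⟩) (Fin.forall_fin_two.2 ⟨hq, sub_pos.2 hq1⟩)
    (by simp [Fin.sum_univ_two]) fun h => hne (congrFun h 0)

noncomputable def crossRisk {ι : Type*} [Fintype ι] (η : ι → ℝ) (c : ℝ) (p : ι → ℝ) (q : ℝ) :
    ℝ :=
  -(∑ y, η y * log (p y)) - (1 - c) * log (1 - q) - c * log q

section CrossRisk

variable {ι : Type*} [Fintype ι] {η p : ι → ℝ} {c q : ℝ}

lemma crossRisk_self_le_crossRisk (hη : ∀ y, 0 < η y) (hc : 0 < c) (hc1 : c < 1)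
    (hp : ∀ y, 0 < p y) (hpη : ∑ y, p y ≤ ∑ y, η y) (hq : 0 < q) (hq1 : q < 1) :
    crossRisk η c η c ≤ crossRisk η c p q := by
  have hclass := sum_mul_log_le_sum_mul_log hη hp hpη
  have hexpert := mul_log_add_mul_log_one_sub_le hc hc1 hq hq1
  simp only [crossRisk]
  linarith

lemma crossRisk_self_lt_crossRisk (hη : ∀ y, 0 < η y) (hc : 0 < c) (hc1 : c < 1)
    (hp : ∀ y, 0 < p y) (hpη : ∑ y, p y ≤ ∑ y, η y) (hq : 0 < q) (hq1 : q < 1)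
    (hne : p ≠ η ∨ q ≠ c) :
    crossRisk η c η c < crossRisk η c p q := by
  simp only [crossRisk]
  rcases hne with hpne | hqne
  · have hclass := sum_mul_log_lt_sum_mul_log hη hp hpη hpne
    have hexpert := mul_log_add_mul_log_one_sub_le hc hc1 hq hq1
    linarith
  · have hclass := sum_mul_log_le_sum_mul_log hη hp hpη
    have hexpert := mul_log_add_mul_log_one_sub_lt hc hc1 hq hq1 hqne
    linarith

end CrossRisk

lemma iSup_lt_sum {ι : Type*} [Fintype ι] [Nontrivial ι] {f : ι → ℝ} (hf : ∀ i, 0 < f i) :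
    ⨆ i, f i < ∑ i, f i := by
  obtain ⟨j, hj⟩ := exists_eq_ciSup_of_finite (f := f)
  obtain ⟨i, hij⟩ := exists_ne j
  rw [← hj]
  exact single_lt_sum hij (mem_univ j) (mem_univ i) (hf i) fun k _ _ => (hf k).le

section AsymmetricSoftmax

variable {K : ℕ} (u : Fin (K + 1) → ℝ)

lemma asoftmax_castSucc (y : Fin K) :
    asoftmax K u y.castSucc = exp (u y.castSucc) / ∑ y' : Fin K, exp (u y'.castSucc) := by
  rw [asoftmax, if_neg (Fin.castSucc_lt_last y).ne]

lemma asoftmax_last :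
    asoftmax K u (Fin.last K) =
      exp (u (Fin.last K)) /
        (exp (u (Fin.last K)) +
          ((∑ y : Fin K, exp (u y.castSucc)) - ⨆ y : Fin K, exp (u y.castSucc))) := by
  rw [asoftmax, if_pos rfl, Fin.sum_univ_castSucc, add_comm, add_sub_assoc]

lemma asoftmax_castSucc_pos (y : Fin K) : 0 < asoftmax K u y.castSucc := by
  rw [asoftmax_castSucc]
  exact div_pos (exp_pos _) (sum_pos (fun _ _ => exp_pos _) ⟨y, mem_univ y⟩)

lemma sum_asoftmax_castSucc [NeZero K] : ∑ y : Fin K, asoftmax K u y.castSucc = 1 := by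
  simp_rw [asoftmax_castSucc, ← sum_div]
  exact div_self (sum_pos (fun _ _ => exp_pos _) univ_nonempty).ne'

lemma asoftmax_last_pos : 0 < asoftmax K u (Fin.last K) := by
  have hsup : ⨆ y : Fin K, exp (u y.castSucc) ≤ ∑ y : Fin K, exp (u y.castSucc) :=
    Real.iSup_le (fun y => single_le_sum (f := fun y : Fin K => exp (u y.castSucc))
      (fun _ _ => (exp_pos _).le) (mem_univ y))
      (sum_nonneg fun _ _ => (exp_pos _).le)
  rw [asoftmax_last]
  exact div_pos (exp_pos _) (add_pos_of_pos_of_nonneg (exp_pos _) (sub_nonneg.2 hsup))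

lemma asoftmax_last_lt_one (hK : 1 < K) : asoftmax K u (Fin.last K) < 1 := by
  have : Nontrivial (Fin K) := Fin.nontrivial_iff_two_le.2 hK
  have hsup := iSup_lt_sum fun y : Fin K => exp_pos (u y.castSucc)
  rw [asoftmax_last, div_lt_one (by linarith [exp_pos (u (Fin.last K))])]
  linarith

end AsymmetricSoftmax

lemma exists_asoftmax_eq {K : ℕ} (hK : 1 < K) {η : Fin K → ℝ} (hpos : ∀ y, 0 < η y)
    (hsum : ∑ y, η y = 1) {c : ℝ} (hc : 0 < c) (hc1 : c < 1) :
    ∃ v : Fin (K + 1) → ℝ,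
      (∀ y : Fin K, asoftmax K v y.castSucc = η y) ∧ asoftmax K v (Fin.last K) = c := by
  have : Nontrivial (Fin K) := Fin.nontrivial_iff_two_le.2 hK
  set M := ⨆ y, η y
  have hM : 0 < 1 - M := sub_pos.2 (hsum ▸ iSup_lt_sum hpos)
  -- `e / (e + (1 - M)) = c` is solved by `e = c (1 - M) / (1 - c)`.
  set e := c * (1 - M) / (1 - c)
  have he : 0 < e := div_pos (mul_pos hc hM) (sub_pos.2 hc1)
  set v : Fin (K + 1) → ℝ := Fin.snoc (fun y => log (η y)) (log e)
  have hv : ∀ y : Fin K, exp (v y.castSucc) = η y := fun y => by simp [v, exp_log (hpos y)]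
  have hvlast : exp (v (Fin.last K)) = e := by simp [v, exp_log he]
  refine ⟨v, fun y => ?_, ?_⟩
  · rw [asoftmax_castSucc]
    simp only [hv, hsum, div_one]
  · rw [asoftmax_last]
    simp only [hv, hsum, hvlast]
    have hden : e + (1 - M) = (1 - M) / (1 - c) := by
      simp only [e]
      field_simp [(sub_pos.2 hc1).ne']
      ring
    rw [hden, div_div_div_cancel_right₀ (sub_pos.2 hc1).ne', mul_div_cancel_right₀ _ hM.ne']

lemma crossRisk_le_condRisk {K : ℕ} (hK : 1 < K) {η : Fin K → ℝ} (hpos : ∀ y, 0 < η y)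
    (hsum : ∑ y, η y = 1) {c : ℝ} (hc : 0 < c) (hc1 : c < 1) (u : Fin (K + 1) → ℝ) :
    crossRisk η c η c ≤ condRisk K η c u :=
  have : NeZero K := ⟨by omega⟩
  crossRisk_self_le_crossRisk hpos hc hc1 (asoftmax_castSucc_pos u)
    (by rw [sum_asoftmax_castSucc, hsum]) (asoftmax_last_pos u) (asoftmax_last_lt_one u hK)

lemma crossRisk_lt_condRisk {K : ℕ} (hK : 1 < K) {η : Fin K → ℝ} (hpos : ∀ y, 0 < η y)
    (hsum : ∑ y, η y = 1) {c : ℝ} (hc : 0 < c) (hc1 : c < 1) {u : Fin (K + 1) → ℝ}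
    (hne : ¬((∀ y : Fin K, asoftmax K u y.castSucc = η y) ∧ asoftmax K u (Fin.last K) = c)) :
    crossRisk η c η c < condRisk K η c u :=
  have : NeZero K := ⟨by omega⟩
  crossRisk_self_lt_crossRisk hpos hc hc1 (asoftmax_castSucc_pos u)
    (by rw [sum_asoftmax_castSucc, hsum]) (asoftmax_last_pos u) (asoftmax_last_lt_one u hK)
    (by simpa only [ne_eq, funext_iff, not_and_or] using hne)

lemma condRisk_eq_crossRisk_self {K : ℕ} {η : Fin K → ℝ} {c : ℝ} {u : Fin (K + 1) → ℝ}
    (hp : ∀ y : Fin K, asoftmax K u y.castSucc = η y) (hq : asoftmax K u (Fin.last K) = c) :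
    condRisk K η c u = crossRisk η c η c := by
  simp only [condRisk, crossRisk, hp, hq]

/-- the conditional risk is minimized exactly when the asymmetric
softmax recovers the class posterior and the expert accuracy. -/
theorem condRisk_minimized_iff (K : ℕ) (hK : 1 < K)
    (η : Fin K → ℝ) (hpos : ∀ y, 0 < η y) (hsum : ∑ y, η y = 1)
    (c : ℝ) (hc : 0 < c) (hc1 : c < 1) (u : Fin (K + 1) → ℝ) :
    (∀ v : Fin (K + 1) → ℝ, condRisk K η c u ≤ condRisk K η c v) ↔
      ((∀ y : Fin K, asoftmax K u y.castSucc = η y) ∧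
        asoftmax K u (Fin.last K) = c) := by
  constructor
  · intro hmin
    by_contra hne
    obtain ⟨v, hp, hq⟩ := exists_asoftmax_eq hK hpos hsum hc hc1
    have hv := hmin v
    rw [condRisk_eq_crossRisk_self hp hq] at hv
    exact hv.not_gt (crossRisk_lt_condRisk hK hpos hsum hc hc1 hne)
  · rintro ⟨hp, hq⟩ v
    rw [condRisk_eq_crossRisk_self hp hq]
    exact crossRisk_le_condRisk hK hpos hsum hc hc1 v
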